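/- Kernel characterization of bicausal plans: If γ ∈ Π_bc(μ,ν) is decomposed by successive disintegration as γ = γ̄(dx₁,dy₁) γ^{x₁,y₁}(dx₂,dy₂) ⋯ γ^{x₁,…,x_{N−1},y₁,…,y_{N−1}}(dx_N,dy_N), then (i) γ̄ ∈ Π(μ₁, ν₁), and (ii) for each t < N and γ-almost every (x₁,…,x_t,y₁,…,y_t), γ^{x₁,…,x_t,y₁,…,y_t}(dx_{t+1},dy_{t+1}) ∈ Π( μ^{x₁,…,x_t}(dx_{t+1}), ν^{y₁,…,y_t}(dy_{t+1}) ). Conversely, given regular kernels γ̄(dx₁,dy₁), γ^{x₁,y₁}(dx₂,dy₂), …, γ^{x₁,…,x_{N−1},y₁,…,y_{N−1}}(dx_N,dy_N) satisfying (i)–(ii), the measure γ obtained by their concatenation belongs to Π_bc(μ,ν). -/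

import Mathlib

open MeasureTheory ProbabilityTheory Set Filter
open scoped ENNReal NNReal BoundedContinuousFunction

noncomputable section

namespace CausalTransport

/-- The path space of a real-valued process in `N` time steps. -/
abbrev Path (N : ℕ) := Fin N → ℝ

/-- Truncation of a path to its first `t` coordinates. -/
def proj (N t : ℕ) (x : Path N) : Fin t → ℝ :=
  fun i => if h : (i : ℕ) < N then x ⟨i, h⟩ else 0

/-- The coordinate with (0-based) index `t`, with junk value `0` if `t ≥ N`. -/
def coord (N t : ℕ) (x : Path N) : ℝ := if h : t < N then x ⟨t, h⟩ else 0

/-- The coordinates of a path after time `t`. -/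
def tailProj (N t : ℕ) (x : Path N) : Fin (N - t) → ℝ := fun i => coord N (t + i) x

/-- Extension of a history of length `t` by one further value. -/
def snocFun (t : ℕ) (xs : Fin t → ℝ) (r : ℝ) : Fin (t + 1) → ℝ :=
  fun i => if h : (i : ℕ) < t then xs ⟨i, h⟩ else r

/-- Extension of a history of length `t` to a full path (by `0`). -/
def pad (N t : ℕ) (xs : Fin t → ℝ) : Path N :=
  fun i => if h : (i : ℕ) < t then xs ⟨i, h⟩ else 0

/-- Glue the first `t` coordinates of `x` with the later coordinates `z`. -/
def glue (N t : ℕ) (x : Path N) (z : Fin (N - t) → ℝ) : Path N :=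
  fun i => if (i : ℕ) < t then x i else
    if h : (i : ℕ) - t < N - t then z ⟨(i : ℕ) - t, h⟩ else 0

/-- Truncation of a pair of paths to the first `t` coordinates of each. -/
def pairProj (N t : ℕ) (p : Path N × Path N) : (Fin t → ℝ) × (Fin t → ℝ) :=
  (proj N t p.1, proj N t p.2)

/-- The σ-algebra on path space generated by the first `t` coordinates. -/
def filt (N t : ℕ) : MeasurableSpace (Path N) :=
  MeasurableSpace.comap (proj N t) inferInstance

/-- `γ` is a transport plan (coupling) between `μ` and `ν`. -/
def IsCoupling {α β : Type*} [MeasurableSpace α] [MeasurableSpace β]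
    (μ : Measure α) (ν : Measure β) (γ : Measure (α × β)) : Prop :=
  γ.map Prod.fst = μ ∧ γ.map Prod.snd = ν

/-- `γ` is a causal transport plan between `μ` and `ν`: it is a coupling and, for any
disintegration `K` of `γ` over its first coordinate and any `t ∈ {1,…,N}`, the map
`x ↦ K x B` is measurable for the σ-algebra of the first `t` coordinates (up to `μ`-null
sets) whenever `B` is measurable for the first `t` coordinates. -/
def IsCausal (N : ℕ) (μ ν : Measure (Path N)) (γ : Measure (Path N × Path N)) : Prop :=
  IsCoupling μ ν γ ∧
  ∀ K : Kernel (Path N) (Path N), IsSFiniteKernel K → μ ⊗ₘ K = γ →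
    ∀ t : ℕ, 1 ≤ t → t ≤ N → ∀ B : Set (Path N), MeasurableSet[filt N t] B →
      ∃ g : Path N → ℝ≥0∞, Measurable[filt N t] g ∧ (fun x => K x B) =ᵐ[μ] g

/-- `γ` is a bicausal transport plan between `μ` and `ν`. -/
def IsBicausal (N : ℕ) (μ ν : Measure (Path N)) (γ : Measure (Path N × Path N)) : Prop :=
  IsCausal N μ ν γ ∧ IsCausal N ν μ (γ.map Prod.swap)

/-- Regular conditional distribution, under `μ`, of the coordinate of index `t`
given the first `t` coordinates. -/
def nextK (N : ℕ) (μ : Measure (Path N)) [IsFiniteMeasure μ] (t : ℕ) :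
    Kernel (Fin t → ℝ) ℝ :=
  (μ.map (fun x => (proj N t x, coord N t x))).condKernel

/-- Regular conditional distribution, under `μ`, of all the coordinates after time `t`
given the first `t` coordinates. -/
def tailK (N : ℕ) (μ : Measure (Path N)) [IsFiniteMeasure μ] (t : ℕ) :
    Kernel (Fin t → ℝ) (Fin (N - t) → ℝ) :=
  (μ.map (fun x => (proj N t x, tailProj N t x))).condKernel

/-- Regular conditional distribution, under `γ`, of the pair of coordinates of index `t`
given the first `t` coordinates of both paths. -/
def stepK (N : ℕ) (γ : Measure (Path N × Path N)) [IsFiniteMeasure γ] (t : ℕ) :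
    Kernel ((Fin t → ℝ) × (Fin t → ℝ)) (ℝ × ℝ) :=
  (γ.map (fun p => (pairProj N t p, (coord N t p.1, coord N t p.2)))).condKernel

/-- Regular conditional distribution, under `μ`, of the coordinate of index `t` given the
single coordinate of index `t-1` (one-step Markov transition kernel). -/
def mstep (N : ℕ) (μ : Measure (Path N)) [IsFiniteMeasure μ] (t : ℕ) : Kernel ℝ ℝ :=
  (μ.map (fun x => (coord N (t - 1) x, coord N t x))).condKernel

/-- `μ` is a Markov measure. -/
def IsMarkovMeasure (N : ℕ) (μ : Measure (Path N)) [IsFiniteMeasure μ] : Prop :=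
  ∀ (t : ℕ) (ht : 1 ≤ t) (_ : t < N),
    ∀ᵐ xs ∂(μ.map (proj N t)), nextK N μ t xs = mstep N μ t (xs ⟨t - 1, by omega⟩)

/-- A causal plan is causal quasi-Markov if (every version of) the conditional law of
`(x_{t+1}, y_{t+1})` given `(x_1,…,x_t,y_1,…,y_t)` depends a.s. only on `(x_t, y_1,…,y_t)`. -/
def IsQuasiMarkov (N : ℕ) (γ : Measure (Path N × Path N)) : Prop :=
  ∀ (t : ℕ) (ht : 1 ≤ t) (_ : t < N),
    ∀ S : Kernel ((Fin t → ℝ) × (Fin t → ℝ)) (ℝ × ℝ), IsSFiniteKernel S →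
      (γ.map (pairProj N t)) ⊗ₘ S
          = γ.map (fun p => (pairProj N t p, (coord N t p.1, coord N t p.2))) →
      ∃ κ : Kernel (ℝ × (Fin t → ℝ)) (ℝ × ℝ),
        ∀ᵐ z ∂(γ.map (pairProj N t)), S z = κ (z.1 ⟨t - 1, by omega⟩, z.2)

/-- Topological support of a measure. -/
def msupport {α : Type*} [TopologicalSpace α] [MeasurableSpace α] (μ : Measure α) : Set α :=
  {x | ∀ U : Set α, IsOpen U → x ∈ U → μ U ≠ 0}

/-- `K` is a version of the disintegration of `μ` at time `t` which is weakly continuous on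
the support of the first `t` coordinates of `μ`. -/
def WeaklyContinuousDisintegration (N t : ℕ) (μ : Measure (Path N))
    (K : Kernel (Fin t → ℝ) (Fin (N - t) → ℝ)) : Prop :=
  IsMarkovKernel K ∧
  (μ.map (proj N t)) ⊗ₘ K = μ.map (fun x => (proj N t x, tailProj N t x)) ∧
  ∀ f : (Fin (N - t) → ℝ) →ᵇ ℝ,
    ContinuousOn (fun xs => ∫ z, f z ∂(K xs)) (msupport (μ.map (proj N t)))

/-- `μ` is successively weakly continuous. -/
def SuccWeakCont (N : ℕ) (μ : Measure (Path N)) : Prop :=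
  ∀ t : ℕ, t < N → ∃ K : Kernel (Fin t → ℝ) (Fin (N - t) → ℝ),
    WeaklyContinuousDisintegration N t μ K

/-- The cumulative distribution function of a measure on `ℝ`. -/
def cdf1 (η : Measure ℝ) (z : ℝ) : ℝ := (η (Iic z)).toReal

/-- The left-continuous generalized inverse (quantile function) of the c.d.f. of `η`. -/
def qinv (η : Measure ℝ) (u : ℝ) : ℝ := sInf {y : ℝ | u ≤ cdf1 η y}

/-- Partial Knothe–Rosenblatt path built from the "uniform" inputs `u`. -/
def krPartial (N : ℕ) (μ : Measure (Path N)) [IsFiniteMeasure μ] (u : ℕ → ℝ) :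
    (t : ℕ) → Fin t → ℝ
  | 0 => Fin.elim0
  | t + 1 => snocFun t (krPartial N μ u t)
      (qinv (nextK N μ t (krPartial N μ u t)) (u t))

/-- The Knothe–Rosenblatt (quantile transform) path built from uniform inputs. -/
def krPath (N : ℕ) (μ : Measure (Path N)) [IsFiniteMeasure μ] (u : Path N) : Path N :=
  krPartial N μ (fun n => if h : n < N then u ⟨n, h⟩ else 0) N

/-- The uniform distribution on `[0,1]`. -/
def unif01 : Measure ℝ := volume.restrict (Icc (0 : ℝ) 1)

instance : IsProbabilityMeasure unif01 := by
  constructor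
  simp [unif01, Real.volume_Icc]

/-- N independent uniforms on `[0,1]`. -/
def uniformCube (N : ℕ) : Measure (Path N) := Measure.pi fun _ => unif01

instance (N : ℕ) : IsProbabilityMeasure (uniformCube N) :=
  inferInstanceAs (IsProbabilityMeasure (Measure.pi fun _ : Fin N => unif01))

/-- The (increasing) Knothe–Rosenblatt rearrangement of `(μ, ν)`: the joint law of
`(X*, Y*)` where both paths are built from the same independent uniforms. -/
def krCoupling (N : ℕ) (μ ν : Measure (Path N)) [IsFiniteMeasure μ] [IsFiniteMeasure ν] :
    Measure (Path N × Path N) :=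
  (uniformCube N).map (fun u => (krPath N μ u, krPath N ν u))

/-- Partial Knothe–Rosenblatt Monge map. -/
def krMapPartial (N : ℕ) (μ ν : Measure (Path N)) [IsFiniteMeasure μ] [IsFiniteMeasure ν]
    (x : Path N) : (t : ℕ) → Fin t → ℝ
  | 0 => Fin.elim0
  | t + 1 => snocFun t (krMapPartial N μ ν x t)
      (qinv (nextK N ν t (krMapPartial N μ ν x t))
        (cdf1 (nextK N μ t (proj N t x)) (coord N t x)))

/-- The Knothe–Rosenblatt Monge map from `μ` to `ν`. -/
def krMap (N : ℕ) (μ ν : Measure (Path N)) [IsFiniteMeasure μ] [IsFiniteMeasure ν]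
    (x : Path N) : Path N :=
  krMapPartial N μ ν x N

open Classical in
/-- Relative entropy `Ent(ν|μ)`, via the nonnegative integrand `f log f - f + 1`,
`f = dν/dμ`; equals `∫ log (dν/dμ) dν` for probability measures. -/
def relEnt {α : Type*} [MeasurableSpace α] (ν μ : Measure α) : ℝ≥0∞ :=
  if ν ≪ μ then
    ∫⁻ x, ENNReal.ofReal
      ((ν.rnDeriv μ x).toReal * Real.log (ν.rnDeriv μ x).toReal
        - (ν.rnDeriv μ x).toReal + 1) ∂μ
  else ∞

/-- Universally measurable `ℝ≥0∞`-valued function. -/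
def UnivMeasurable {α : Type*} [MeasurableSpace α] (f : α → ℝ≥0∞) : Prop :=
  ∀ P : Measure α, IsFiniteMeasure P → AEMeasurable f P

/-- Concatenation of the kernels `κ t` into a measure on pairs of `t`-histories. -/
def concat (κ : (t : ℕ) → Kernel ((Fin t → ℝ) × (Fin t → ℝ)) (ℝ × ℝ)) :
    (t : ℕ) → Measure ((Fin t → ℝ) × (Fin t → ℝ))
  | 0 => Measure.dirac ((Fin.elim0 : Fin 0 → ℝ), (Fin.elim0 : Fin 0 → ℝ))
  | t + 1 => ((concat κ t) ⊗ₘ κ t).map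
      (fun q => (snocFun t q.1.1 q.2.1, snocFun t q.1.2 q.2.2))


/-!
Causality of a plan is the conditional independence of `y_{1..t}` and `x` given `x_{1..t}`: the
law of `(x, y_{1..t})` is `μ ⊗ L(x_{1..t})` for a kernel `L`. For a causal plan, conditioning on
`y_{1..t}` in addition to `x_{1..t}` therefore does not change the law of `x_{t+1}`, so the
disintegration of `γ` at time `t` has first marginal `μ^{x_{1..t}}`; applied to the swapped plan,
the same argument identifies the second marginal as `ν^{y_{1..t}}`.

Conversely, along a concatenation of kernels whose first marginals are `μ^{x_{1..s}}`, each new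
coordinate `x_{s+1}` is drawn independently of `y_{1..t}` given `x_{1..s}`. By induction on `s ≥ t`
the law of `(x_{1..s}, y_{1..t})` is `μ_{1..s} ⊗ L(x_{1..t})`, with `L` the disintegration of the
concatenation at time `t`. At `s = N` this is causality, and swapping `x` and `y` gives
bicausality.
-/

section MeasureLemmas

variable {α β γ α' β' : Type*} [MeasurableSpace α] [MeasurableSpace β] [MeasurableSpace γ]
  [MeasurableSpace α'] [MeasurableSpace β']

theorem measure_eq_of_subsingleton [Subsingleton α] (μ ν : Measure α) [IsProbabilityMeasure μ]
    [IsProbabilityMeasure ν] : μ = ν := by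
  ext s _
  rcases s.eq_empty_or_nonempty with rfl | hs
  · simp
  · simp [Subsingleton.eq_univ_of_nonempty hs]

theorem map_prodMap_compProd (ρ : Measure α) [SFinite ρ] (η : Kernel α β) [IsSFiniteKernel η]
    {g : α → α'} (hg : Measurable g) {f : β → β'} (hf : Measurable f)
    (η' : Kernel α' β') [IsSFiniteKernel η'] (h : ∀ᵐ a ∂ρ, (η a).map f = η' (g a)) :
    (ρ ⊗ₘ η).map (Prod.map g f) = ρ.map g ⊗ₘ η' := by
  ext s hs
  rw [Measure.map_apply (hg.prodMap hf) hs, Measure.compProd_apply (hg.prodMap hf hs),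
    Measure.compProd_apply hs, lintegral_map (Kernel.measurable_kernel_prodMk_left hs) hg]
  refine lintegral_congr_ae ?_
  filter_upwards [h] with a ha
  rw [← ha, Measure.map_apply hf (measurable_prodMk_left hs)]
  rfl

theorem ae_eq_of_compProd_eq_of_isSFiniteKernel
    [MeasurableSpace.CountableOrCountablyGenerated α β] {ρ : Measure α} [IsFiniteMeasure ρ]
    {κ η : Kernel α β} [IsSFiniteKernel κ] [IsFiniteKernel η] (h : ρ ⊗ₘ κ = ρ ⊗ₘ η) :
    κ =ᵐ[ρ] η := by
  have h_univ : ∀ᵐ a ∂ρ, κ a univ = η a univ := by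
    refine ae_eq_of_forall_setLIntegral_eq_of_sigmaFinite (κ.measurable_coe .univ)
      (η.measurable_coe .univ) fun s hs _ => ?_
    rw [← Measure.compProd_apply_prod hs .univ, h, Measure.compProd_apply_prod hs .univ]
  classical
  -- `Kernel.ae_eq_of_compProd_eq` needs a finite kernel: replace `κ` by `η` on the null set
  -- where their masses differ
  have hG : MeasurableSet {a | κ a univ = η a univ} :=
    measurableSet_eq_fun (κ.measurable_coe .univ) (η.measurable_coe .univ)
  set κ' := Kernel.piecewise hG κ η
  have : IsFiniteKernel κ' := ⟨⟨η.bound, η.bound_lt_top, fun a => by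
    by_cases ha : κ a univ = η a univ <;>
      simpa [κ', Kernel.piecewise_apply, ha] using η.measure_le_bound a univ⟩⟩
  have hκ' : κ =ᵐ[ρ] κ' := by
    filter_upwards [h_univ] with a ha
    simp [κ', Kernel.piecewise_apply, ha]
  filter_upwards [hκ', Kernel.ae_eq_of_compProd_eq ((Measure.compProd_congr hκ').symm.trans h)]
    with a h₁ h₂ using h₁.trans h₂

theorem compProd_prodMkRight_apply_prod (ρ : Measure α) [SFinite ρ] (κ : Kernel α β)
    [IsSFiniteKernel κ] (η : Kernel α γ) [IsSFiniteKernel η] {s : Set α} {t : Set β} {u : Set γ}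
    (hs : MeasurableSet s) (ht : MeasurableSet t) (hu : MeasurableSet u) :
    ((ρ ⊗ₘ κ) ⊗ₘ η.prodMkRight β) ((s ×ˢ t) ×ˢ u) = ∫⁻ a in s, κ a t * η a u ∂ρ := by
  rw [Measure.compProd_apply_prod (hs.prod ht) hu]
  simp_rw [Kernel.prodMkRight_apply]
  rw [Measure.setLIntegral_compProd (f := fun p => η p.1 u)
    ((η.measurable_coe hu).comp measurable_fst) hs ht]
  refine setLIntegral_congr_fun hs fun a _ => ?_
  simp [mul_comm]

theorem map_compProd_prodMkRight_comm (ρ : Measure α) [IsFiniteMeasure ρ]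
    (κ : Kernel α β) [IsFiniteKernel κ] (η : Kernel α γ) [IsFiniteKernel η] :
    ((ρ ⊗ₘ κ) ⊗ₘ η.prodMkRight β).map (fun p => ((p.1.1, p.2), p.1.2))
      = (ρ ⊗ₘ η) ⊗ₘ κ.prodMkRight γ := by
  refine Measure.ext_prod₃_iff'.mpr fun {s u t} hs hu ht => ?_
  have hpre : (fun p : (α × β) × γ => ((p.1.1, p.2), p.1.2)) ⁻¹' ((s ×ˢ u) ×ˢ t)
      = (s ×ˢ t) ×ˢ u := by
    ext; simp [and_right_comm]
  rw [Measure.map_apply (by fun_prop) ((hs.prod hu).prod ht), hpre,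
    compProd_prodMkRight_apply_prod _ _ _ hs ht hu, compProd_prodMkRight_apply_prod _ _ _ hs hu ht]
  simp_rw [mul_comm]

variable {μ : Measure α} {ν : Measure β} {π : Measure (α × β)}

theorem IsCoupling.isFiniteMeasure [IsFiniteMeasure μ] (h : IsCoupling μ ν π) :
    IsFiniteMeasure π :=
  ⟨by simpa [← h.1, Measure.map_apply measurable_fst .univ] using measure_lt_top μ univ⟩

theorem IsCoupling.map {f : α → α'} {g : β → β'} (hf : Measurable f) (hg : Measurable g)
    (h : IsCoupling μ ν π) : IsCoupling (μ.map f) (ν.map g) (π.map (Prod.map f g)) := by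
  constructor
  · rw [Measure.map_map measurable_fst (hf.prodMap hg), ← h.1, Measure.map_map hf measurable_fst]
    rfl
  · rw [Measure.map_map measurable_snd (hf.prodMap hg), ← h.2, Measure.map_map hg measurable_snd]
    rfl

end MeasureLemmas

@[fun_prop]
theorem measurable_proj (N t : ℕ) : Measurable (proj N t) := by
  refine measurable_pi_lambda _ fun i => ?_
  unfold proj
  split_ifs
  exacts [measurable_pi_apply _, measurable_const]

@[fun_prop]
theorem measurable_coord (N t : ℕ) : Measurable (coord N t) := by
  unfold coord
  split_ifs
  exacts [measurable_pi_apply _, measurable_const]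

@[fun_prop]
theorem measurable_pairProj (N t : ℕ) : Measurable (pairProj N t) := by
  unfold pairProj
  fun_prop

@[fun_prop]
theorem measurable_snocFun {α : Type*} [MeasurableSpace α] {t : ℕ} {f : α → Fin t → ℝ}
    {g : α → ℝ} (hf : Measurable f) (hg : Measurable g) :
    Measurable (fun a => snocFun t (f a) (g a)) := by
  refine measurable_pi_lambda _ fun i => ?_
  unfold snocFun
  split_ifs
  exacts [(measurable_pi_apply _).comp hf, hg]

theorem proj_self (N : ℕ) : proj N N = id := by
  funext x i
  simp [proj]

theorem proj_snocFun {s t : ℕ} (hts : t ≤ s) (b : Fin s → ℝ) (d : ℝ) :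
    proj (s + 1) t (snocFun s b d) = proj s t b := by
  funext i
  have hi : (i : ℕ) < s := i.isLt.trans_le hts
  simp [proj, snocFun, hi, Nat.lt_succ_of_lt hi]

theorem proj_succ {N s : ℕ} (hs : s < N) (x : Path N) :
    proj N (s + 1) x = snocFun s (proj N s x) (coord N s x) := by
  funext i
  by_cases hi : (i : ℕ) < s
  · simp [proj, snocFun, hi, hi.trans hs]
  · have hi' : (i : ℕ) = s := by omega
    simp [proj, snocFun, coord, hs, hi']

section NextKernel

variable {N : ℕ} (μ : Measure (Path N))

instance [IsProbabilityMeasure μ] (t : ℕ) : IsProbabilityMeasure (μ.map (proj N t)) :=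
  Measure.isProbabilityMeasure_map (by fun_prop)

instance [IsFiniteMeasure μ] (t : ℕ) : IsMarkovKernel (nextK N μ t) := by
  unfold nextK
  infer_instance

theorem map_proj_compProd_nextK [IsFiniteMeasure μ] (t : ℕ) :
    μ.map (proj N t) ⊗ₘ nextK N μ t = μ.map (fun x => (proj N t x, coord N t x)) := by
  have hfst : (μ.map (fun x => (proj N t x, coord N t x))).fst = μ.map (proj N t) := by
    rw [Measure.fst, Measure.map_map measurable_fst (by fun_prop)]
    rfl
  rw [nextK, ← hfst, Measure.disintegrate]

theorem map_compProd_nextK_snocFun [IsFiniteMeasure μ] {s : ℕ} (hs : s < N) :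
    (μ.map (proj N s) ⊗ₘ nextK N μ s).map (fun p => snocFun s p.1 p.2)
      = μ.map (proj N (s + 1)) := by
  rw [map_proj_compProd_nextK, Measure.map_map (by fun_prop) (by fun_prop)]
  congr 1
  funext x
  exact (proj_succ hs x).symm

theorem nextK_zero [IsProbabilityMeasure μ] (h : Fin 0 → ℝ) :
    nextK N μ 0 h = μ.map (coord N 0) := by
  ext C hC
  have key := congrArg (· (univ ×ˢ C)) (map_proj_compProd_nextK μ 0)
  have hconst : ∀ h' : Fin 0 → ℝ, nextK N μ 0 h' C = nextK N μ 0 h C := fun h' => by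
    rw [Subsingleton.elim h' h]
  rw [Measure.compProd_apply_prod .univ hC, Measure.restrict_univ, lintegral_congr hconst,
    lintegral_const, measure_univ, mul_one,
    Measure.map_apply (by fun_prop) (MeasurableSet.univ.prod hC)] at key
  rw [key, Measure.map_apply (by fun_prop) hC]
  congr 1
  ext
  simp

end NextKernel

section Causality

variable {N t : ℕ}

/-- `y_{1..t}` is conditionally independent of `x` given `x_{1..t}` under `θ`. -/
def IsCausalAt (N t : ℕ) (θ : Measure (Path N × Path N)) : Prop :=
  ∃ L : Kernel (Fin t → ℝ) (Fin t → ℝ), IsMarkovKernel L ∧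
    θ.map (fun q => (q.1, proj N t q.2))
      = θ.map Prod.fst ⊗ₘ L.comap (proj N t) (measurable_proj N t)

theorem isCausal_of_isCausalAt {μ ν : Measure (Path N)} [IsFiniteMeasure μ]
    {γ : Measure (Path N × Path N)} (hγ : IsCoupling μ ν γ)
    (hcausal : ∀ t, 1 ≤ t → t ≤ N → IsCausalAt N t γ) : IsCausal N μ ν γ := by
  refine ⟨hγ, fun K _ hK t ht htN B hB => ?_⟩
  obtain ⟨A, hA, rfl⟩ := hB
  obtain ⟨L, _, hL⟩ := hcausal t ht htN
  have hKL : K.map (proj N t) =ᵐ[μ] L.comap (proj N t) (measurable_proj N t) := by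
    refine ae_eq_of_compProd_eq_of_isSFiniteKernel ?_
    rw [Measure.compProd_map (measurable_proj N t), hK, ← hγ.1]
    exact hL
  refine ⟨fun x => L (proj N t x) A, (L.measurable_coe hA).comp (comap_measurable _), ?_⟩
  filter_upwards [hKL] with x hx
  rw [← Measure.map_apply (measurable_proj N t) hA, ← Kernel.map_apply _ (measurable_proj N t),
    hx, Kernel.comap_apply]

theorem IsCausal.isCausalAt {p q : Measure (Path N)} [IsFiniteMeasure p]
    {θ : Measure (Path N × Path N)} (hθ : IsCausal N p q θ) (ht : 1 ≤ t) (htN : t ≤ N) :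
    IsCausalAt N t θ := by
  have := hθ.1.isFiniteMeasure
  set L := (θ.map (pairProj N t)).condKernel
  have hdis : p ⊗ₘ θ.condKernel = θ := by
    rw [← hθ.1.1]
    exact θ.disintegrate _
  have hfst : (θ.map (pairProj N t)).fst = p.map (proj N t) := by
    rw [Measure.fst, Measure.map_map measurable_fst (by fun_prop), ← hθ.1.1,
      Measure.map_map (by fun_prop) measurable_fst]
    rfl
  -- causality makes `θ.condKernel x (proj⁻¹' B)` a function `G` of `proj x`, and disintegrating
  -- the law of `pairProj` identifies `G` with `L · B`
  have hK : ∀ B, MeasurableSet B →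
      (fun x => θ.condKernel x (proj N t ⁻¹' B)) =ᵐ[p] fun x => L (proj N t x) B := by
    intro B hB
    obtain ⟨g, hg, hKg⟩ :=
      hθ.2 θ.condKernel inferInstance hdis t ht htN (proj N t ⁻¹' B) ⟨B, hB, rfl⟩
    obtain ⟨G, hG, rfl⟩ := hg.exists_eq_measurable_comp
    refine hKg.trans <|
      ae_of_ae_map (measurable_proj N t).aemeasurable (p := fun h => G h = L h B) ?_
    refine ae_eq_of_forall_setLIntegral_eq_of_sigmaFinite hG (L.measurable_coe hB)
      fun A hA _ => ?_
    rw [← hfst, Measure.setLIntegral_condKernel_eq_measure_prod hA hB, hfst,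
      setLIntegral_map hA hG (measurable_proj N t),
      Measure.map_apply (measurable_pairProj N t) (hA.prod hB)]
    conv_rhs => rw [← hdis]
    rw [← setLIntegral_congr_fun_ae (g := fun x => G (proj N t x)) ((measurable_proj N t) hA)
        (hKg.mono fun x hx _ => hx),
      ← Measure.compProd_apply_prod (measurable_proj N t hA) (measurable_proj N t hB)]
    rfl
  refine ⟨L, inferInstance, Measure.ext_prod fun {A B} hA hB => ?_⟩
  rw [Measure.map_apply (by fun_prop) (hA.prod hB), hθ.1.1, Measure.compProd_apply_prod hA hB]
  conv_lhs => rw [← hdis]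
  rw [show (fun q : Path N × Path N => (q.1, proj N t q.2)) ⁻¹' (A ×ˢ B)
      = A ×ˢ (proj N t ⁻¹' B) from rfl, Measure.compProd_apply_prod hA (measurable_proj N t hB)]
  exact setLIntegral_congr_fun_ae hA ((hK B hB).mono fun x hx _ => hx)

theorem IsCausalAt.map_pairProj_coord_fst {p : Measure (Path N)} [IsFiniteMeasure p]
    {θ : Measure (Path N × Path N)} (hθ : IsCausalAt N t θ) (hfst : θ.map Prod.fst = p) :
    θ.map (fun q => (pairProj N t q, coord N t q.1))
      = θ.map (pairProj N t) ⊗ₘ (nextK N p t).prodMkRight (Fin t → ℝ) := by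
  obtain ⟨L, _, hL⟩ := hθ
  rw [hfst] at hL
  have h_hist : θ.map (pairProj N t) = p.map (proj N t) ⊗ₘ L := by
    calc θ.map (pairProj N t)
        = (θ.map (fun q => (q.1, proj N t q.2))).map (Prod.map (proj N t) id) := by
          rw [Measure.map_map (by fun_prop) (by fun_prop)]
          rfl
      _ = p.map (proj N t) ⊗ₘ L := by
          rw [hL, map_prodMap_compProd _ _ (measurable_proj N t) measurable_id L
            (ae_of_all _ fun x => by rw [Measure.map_id, Kernel.comap_apply])]
  have h_next : θ.map (fun q => (pairProj N t q, coord N t q.1))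
      = ((p.map (proj N t) ⊗ₘ nextK N p t) ⊗ₘ L.prodMkRight ℝ).map
          (fun r => ((r.1.1, r.2), r.1.2)) := by
    calc θ.map (fun q => (pairProj N t q, coord N t q.1))
        = ((θ.map (fun q => (q.1, proj N t q.2))).map
            (Prod.map (fun x => (proj N t x, coord N t x)) id)).map
              (fun r => ((r.1.1, r.2), r.1.2)) := by
          rw [Measure.map_map (by fun_prop) (by fun_prop),
            Measure.map_map (by fun_prop) (by fun_prop)]
          rfl
      _ = _ := by
          rw [hL, map_prodMap_compProd _ _ (by fun_prop) measurable_id (L.prodMkRight ℝ)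
            (ae_of_all _ fun x => by
              rw [Measure.map_id, Kernel.comap_apply, Kernel.prodMkRight_apply]),
            map_proj_compProd_nextK]
  rw [h_next, map_compProd_prodMkRight_comm, h_hist]

end Causality

section Bicausal

variable {N t : ℕ} {μ ν : Measure (Path N)} [IsFiniteMeasure μ] [IsFiniteMeasure ν]
  {γ : Measure (Path N × Path N)}

theorem IsBicausal.map_pairProj_coord_snd (hγ : IsBicausal N μ ν γ) (ht : 1 ≤ t) (htN : t ≤ N) :
    γ.map (fun q => (pairProj N t q, coord N t q.2))
      = γ.map (pairProj N t) ⊗ₘ (nextK N ν t).prodMkLeft (Fin t → ℝ) := by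
  have := hγ.1.1.isFiniteMeasure
  have h := congrArg (·.map (Prod.map Prod.swap id))
    ((hγ.2.isCausalAt ht htN).map_pairProj_coord_fst hγ.2.1.1)
  rw [Measure.map_map (by fun_prop) (by fun_prop), Measure.map_map (by fun_prop) (by fun_prop),
    map_prodMap_compProd _ _ measurable_swap measurable_id _ (ae_of_all _ fun z => by
      rw [Measure.map_id, Kernel.prodMkRight_apply, Kernel.prodMkLeft_apply, Prod.snd_swap]),
    Measure.map_map measurable_swap (by fun_prop), Measure.map_map (by fun_prop) measurable_swap]
    at h
  exact h

theorem IsBicausal.ae_isCoupling (hγ : IsBicausal N μ ν γ) (ht : 1 ≤ t) (htN : t ≤ N)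
    (S : Kernel ((Fin t → ℝ) × (Fin t → ℝ)) (ℝ × ℝ)) [IsSFiniteKernel S]
    (hS : γ.map (pairProj N t) ⊗ₘ S
      = γ.map (fun p => (pairProj N t p, (coord N t p.1, coord N t p.2)))) :
    ∀ᵐ z ∂(γ.map (pairProj N t)), IsCoupling (nextK N μ t z.1) (nextK N ν t z.2) (S z) := by
  have := hγ.1.1.isFiniteMeasure
  have h_marginal : ∀ {f : ℝ × ℝ → ℝ} (_ : Measurable f) {η : Kernel _ ℝ} [IsMarkovKernel η],
      γ.map (fun q => (pairProj N t q, f (coord N t q.1, coord N t q.2)))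
        = γ.map (pairProj N t) ⊗ₘ η → S.map f =ᵐ[γ.map (pairProj N t)] η := by
    intro f hf η _ h
    refine ae_eq_of_compProd_eq_of_isSFiniteKernel ?_
    rw [Measure.compProd_map hf, hS, Measure.map_map (by fun_prop) (by fun_prop), ← h]
    rfl
  filter_upwards
    [h_marginal measurable_fst ((hγ.1.isCausalAt ht htN).map_pairProj_coord_fst hγ.1.1.1),
      h_marginal measurable_snd (hγ.map_pairProj_coord_snd ht htN)] with z h₁ h₂
  exact ⟨by rw [← Kernel.map_apply _ measurable_fst, h₁, Kernel.prodMkRight_apply],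
    by rw [← Kernel.map_apply _ measurable_snd, h₂, Kernel.prodMkLeft_apply]⟩

end Bicausal

section Concatenation

variable {N : ℕ} {κ : (t : ℕ) → Kernel ((Fin t → ℝ) × (Fin t → ℝ)) (ℝ × ℝ)}

instance isProbabilityMeasure_concat [∀ t, IsMarkovKernel (κ t)] :
    ∀ t, IsProbabilityMeasure (concat κ t)
  | 0 => by
    rw [concat]
    infer_instance
  | t + 1 => by
    have := isProbabilityMeasure_concat t
    rw [concat]
    exact Measure.isProbabilityMeasure_map (by fun_prop)

/-- Conditions (i)–(ii) on the kernels `κ`, with (i) the case `s = 0` (see `nextK_zero`). -/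
def IsCouplingFamily (N : ℕ) (μ ν : Measure (Path N)) [IsFiniteMeasure μ] [IsFiniteMeasure ν]
    (κ : (t : ℕ) → Kernel ((Fin t → ℝ) × (Fin t → ℝ)) (ℝ × ℝ)) : Prop :=
  ∀ s < N, ∀ᵐ z ∂(concat κ s), IsCoupling (nextK N μ s z.1) (nextK N ν s z.2) (κ s z)

theorem isCouplingFamily_of_isCoupling {μ ν : Measure (Path N)} [IsProbabilityMeasure μ]
    [IsProbabilityMeasure ν]
    (h0 : IsCoupling (μ.map (coord N 0)) (ν.map (coord N 0))
      (κ 0 ((Fin.elim0 : Fin 0 → ℝ), (Fin.elim0 : Fin 0 → ℝ))))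
    (hsucc : ∀ t, 1 ≤ t → t < N → ∀ᵐ z ∂(concat κ t),
      IsCoupling (nextK N μ t z.1) (nextK N ν t z.2) (κ t z)) :
    IsCouplingFamily N μ ν κ := by
  rintro (_ | s) hs
  · refine ae_of_all _ fun z => ?_
    rw [nextK_zero, nextK_zero, Subsingleton.elim z (Fin.elim0, Fin.elim0)]
    exact h0
  · exact hsucc (s + 1) s.succ_pos hs

variable [∀ t, IsMarkovKernel (κ t)]

theorem map_swap_concat :
    ∀ s, (concat κ s).map Prod.swap = concat (fun t => (κ t).swapRight.swapLeft) s
  | 0 => by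
    rw [concat, concat, Measure.map_dirac' measurable_swap]
    rfl
  | s + 1 => by
    calc (concat κ (s + 1)).map Prod.swap
        = ((concat κ s ⊗ₘ κ s).map (Prod.map Prod.swap Prod.swap)).map
            (fun q => (snocFun s q.1.1 q.2.1, snocFun s q.1.2 q.2.2)) := by
          rw [concat, Measure.map_map (by fun_prop) (by fun_prop),
            Measure.map_map (by fun_prop) (by fun_prop)]
          rfl
      _ = concat (fun t => (κ t).swapRight.swapLeft) (s + 1) := by
          rw [map_prodMap_compProd _ _ measurable_swap measurable_swap (κ s).swapRight.swapLeft
            (ae_of_all _ fun z => by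
              rw [Kernel.swapLeft_apply, Kernel.swapRight_apply, Prod.swap_swap]),
            map_swap_concat s, concat]

theorem IsCouplingFamily.swap {μ ν : Measure (Path N)} [IsFiniteMeasure μ] [IsFiniteMeasure ν]
    (h : IsCouplingFamily N μ ν κ) :
    IsCouplingFamily N ν μ (fun t => (κ t).swapRight.swapLeft) := by
  intro s hs
  rw [← map_swap_concat]
  refine MeasurableEquiv.prodComm.measurableEmbedding.ae_map_iff.mpr ?_
  filter_upwards [h s hs] with z hz
  change IsCoupling (nextK N ν s z.2) (nextK N μ s z.1) ((κ s).swapRight.swapLeft z.swap)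
  have hκz : (κ s).swapRight.swapLeft z.swap = (κ s z).map Prod.swap := by
    rw [Kernel.swapLeft_apply, Kernel.swapRight_apply, Prod.swap_swap]
  constructor
  · rw [hκz, Measure.map_map measurable_fst measurable_swap]
    exact hz.2
  · rw [hκz, Measure.map_map measurable_snd measurable_swap]
    exact hz.1

variable {μ ν : Measure (Path N)} [IsProbabilityMeasure μ] [IsFiniteMeasure ν]

theorem IsCouplingFamily.map_fst_concat (h : IsCouplingFamily N μ ν κ) :
    ∀ s ≤ N, (concat κ s).map Prod.fst = μ.map (proj N s)
  | 0, _ => by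
    have : IsProbabilityMeasure ((concat κ 0).map Prod.fst) :=
      Measure.isProbabilityMeasure_map (by fun_prop)
    exact measure_eq_of_subsingleton _ _
  | s + 1, hs => by
    calc (concat κ (s + 1)).map Prod.fst
        = ((concat κ s ⊗ₘ κ s).map (Prod.map Prod.fst Prod.fst)).map
            (fun p => snocFun s p.1 p.2) := by
          rw [concat, Measure.map_map (by fun_prop) (by fun_prop),
            Measure.map_map (by fun_prop) (by fun_prop)]
          rfl
      _ = μ.map (proj N (s + 1)) := by
          rw [map_prodMap_compProd _ _ measurable_fst measurable_fst (nextK N μ s)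
            ((h s hs).mono fun z hz => hz.1), h.map_fst_concat s (by omega),
            map_compProd_nextK_snocFun μ hs]

theorem IsCouplingFamily.map_fst_concat_self (h : IsCouplingFamily N μ ν κ) :
    (concat κ N).map Prod.fst = μ := by
  rw [h.map_fst_concat N le_rfl, proj_self, Measure.map_id]

theorem IsCouplingFamily.map_concat_proj_snd (h : IsCouplingFamily N μ ν κ) {t s : ℕ}
    (hts : t ≤ s) (hsN : s ≤ N) :
    (concat κ s).map (fun z => (z.1, proj s t z.2))
      = μ.map (proj N s) ⊗ₘ (concat κ t).condKernel.comap (proj s t) (measurable_proj s t) := by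
  set L := (concat κ t).condKernel
  induction s, hts using Nat.le_induction with
  | base =>
    have hL : L.comap (proj t t) (measurable_proj t t) = L := by
      ext1 a
      rw [Kernel.comap_apply, proj_self]
      rfl
    have hid : (fun z : (Fin t → ℝ) × (Fin t → ℝ) => (z.1, proj t t z.2)) = id := by
      funext z
      simp [proj_self]
    rw [hL, hid, Measure.map_id, ← h.map_fst_concat t hsN]
    exact ((concat κ t).disintegrate L).symm
  | succ s hts ih =>
    have hs : s < N := hsN
    -- `x_{s+1}` has law `nextK μ s x_{1..s}`, which does not see `y_{1..t}`
    calc (concat κ (s + 1)).map (fun z => (z.1, proj (s + 1) t z.2))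
        = ((((concat κ s) ⊗ₘ κ s).map (Prod.map (fun z => (z.1, proj s t z.2)) Prod.fst)).map
            (fun r => ((r.1.1, r.2), r.1.2))).map (Prod.map (fun p => snocFun s p.1 p.2) id) := by
          rw [concat, Measure.map_map (by fun_prop) (by fun_prop),
            Measure.map_map (by fun_prop) (by fun_prop),
            Measure.map_map (by fun_prop) (by fun_prop)]
          congr 1
          funext q
          simp [proj_snocFun hts]
      _ = (((μ.map (proj N s) ⊗ₘ nextK N μ s) ⊗ₘ
            (L.comap (proj s t) (measurable_proj s t)).prodMkRight ℝ)).map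
              (Prod.map (fun p => snocFun s p.1 p.2) id) := by
          rw [map_prodMap_compProd (g := fun z => (z.1, proj s t z.2)) _ _ (by fun_prop)
            measurable_fst ((nextK N μ s).prodMkRight _) ((h s hs).mono fun z hz => hz.1),
            ih hs.le, map_compProd_prodMkRight_comm]
      _ = μ.map (proj N (s + 1)) ⊗ₘ L.comap (proj (s + 1) t) (measurable_proj (s + 1) t) := by
          rw [map_prodMap_compProd _ _ (by fun_prop) measurable_id
            (L.comap (proj (s + 1) t) (measurable_proj (s + 1) t))
            (ae_of_all _ fun p => by simp [Kernel.comap_apply, proj_snocFun hts]),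
            map_compProd_nextK_snocFun μ hs]

theorem IsCouplingFamily.isCausal_concat (h : IsCouplingFamily N μ ν κ)
    (hsnd : (concat κ N).map Prod.snd = ν) : IsCausal N μ ν (concat κ N) := by
  refine isCausal_of_isCausalAt ⟨h.map_fst_concat_self, hsnd⟩ fun t _ ht => ?_
  refine ⟨(concat κ t).condKernel, inferInstance, ?_⟩
  rw [h.map_fst_concat_self, h.map_concat_proj_snd ht le_rfl, proj_self, Measure.map_id]

end Concatenation

theorem IsCouplingFamily.isBicausal_concat {N : ℕ}
    {κ : (t : ℕ) → Kernel ((Fin t → ℝ) × (Fin t → ℝ)) (ℝ × ℝ)} [∀ t, IsMarkovKernel (κ t)]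
    {μ ν : Measure (Path N)} [IsProbabilityMeasure μ] [IsProbabilityMeasure ν]
    (h : IsCouplingFamily N μ ν κ) : IsBicausal N μ ν (concat κ N) := by
  have hsnd : (concat κ N).map Prod.snd = ν := by
    rw [← h.swap.map_fst_concat_self, ← map_swap_concat,
      Measure.map_map measurable_fst measurable_swap]
    rfl
  refine ⟨h.isCausal_concat hsnd, ?_⟩
  rw [map_swap_concat]
  refine h.swap.isCausal_concat ?_
  rw [← map_swap_concat, Measure.map_map measurable_snd measurable_swap]
  exact h.map_fst_concat_self

theorem bicausal_kernel_characterization_general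
    (N : ℕ)
    (μ ν : Measure (Path N)) [IsProbabilityMeasure μ] [IsProbabilityMeasure ν] :
    (∀ γ : Measure (Path N × Path N), IsBicausal N μ ν γ →
      IsCoupling (μ.map (coord N 0)) (ν.map (coord N 0))
          (γ.map (fun p => (coord N 0 p.1, coord N 0 p.2)))
        ∧ ∀ (t : ℕ), 1 ≤ t → t < N →
            ∀ S : Kernel ((Fin t → ℝ) × (Fin t → ℝ)) (ℝ × ℝ), IsSFiniteKernel S →
              (γ.map (pairProj N t)) ⊗ₘ S
                  = γ.map (fun p => (pairProj N t p, (coord N t p.1, coord N t p.2))) →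
              ∀ᵐ z ∂(γ.map (pairProj N t)),
                IsCoupling (nextK N μ t z.1) (nextK N ν t z.2) (S z))
    ∧ (∀ κ : (t : ℕ) → Kernel ((Fin t → ℝ) × (Fin t → ℝ)) (ℝ × ℝ),
        (∀ t, IsMarkovKernel (κ t)) →
        IsCoupling (μ.map (coord N 0)) (ν.map (coord N 0))
          (κ 0 ((Fin.elim0 : Fin 0 → ℝ), (Fin.elim0 : Fin 0 → ℝ))) →
        (∀ (t : ℕ), 1 ≤ t → t < N →
          ∀ᵐ z ∂(concat κ t),
            IsCoupling (nextK N μ t z.1) (nextK N ν t z.2) (κ t z)) →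
        IsBicausal N μ ν (concat κ N)) := by
  refine ⟨fun γ hγ => ⟨?_, fun t ht htN S _ hS => hγ.ae_isCoupling ht htN.le S hS⟩,
    fun κ _ h0 hsucc => (isCouplingFamily_of_isCoupling h0 hsucc).isBicausal_concat⟩
  exact hγ.1.1.map (measurable_coord N 0) (measurable_coord N 0)

theorem bicausal_kernel_characterization
    (N : ℕ) (hN : 0 < N)
    (μ ν : Measure (Path N)) [IsProbabilityMeasure μ] [IsProbabilityMeasure ν] :
    (∀ γ : Measure (Path N × Path N), IsBicausal N μ ν γ →
      IsCoupling (μ.map (coord N 0)) (ν.map (coord N 0))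
          (γ.map (fun p => (coord N 0 p.1, coord N 0 p.2)))
        ∧ ∀ (t : ℕ), 1 ≤ t → t < N →
            ∀ S : Kernel ((Fin t → ℝ) × (Fin t → ℝ)) (ℝ × ℝ), IsSFiniteKernel S →
              (γ.map (pairProj N t)) ⊗ₘ S
                  = γ.map (fun p => (pairProj N t p, (coord N t p.1, coord N t p.2))) →
              ∀ᵐ z ∂(γ.map (pairProj N t)),
                IsCoupling (nextK N μ t z.1) (nextK N ν t z.2) (S z))
    ∧ (∀ κ : (t : ℕ) → Kernel ((Fin t → ℝ) × (Fin t → ℝ)) (ℝ × ℝ),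
        (∀ t, IsMarkovKernel (κ t)) →
        IsCoupling (μ.map (coord N 0)) (ν.map (coord N 0))
          (κ 0 ((Fin.elim0 : Fin 0 → ℝ), (Fin.elim0 : Fin 0 → ℝ))) →
        (∀ (t : ℕ), 1 ≤ t → t < N →
          ∀ᵐ z ∂(concat κ t),
            IsCoupling (nextK N μ t z.1) (nextK N ν t z.2) (κ t z)) →
        IsBicausal N μ ν (concat κ N)) :=
  bicausal_kernel_characterization_general N μ ν

end CausalTransport
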